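/- arXiv:2006.13059 — 5 statements merged into one kernel-verified Lean document; each statement's English description precedes it below -/
import Mathlib

section
/- Let V be a finite-dimensional complex vector space, g : V × V → ℂ a nondegenerate bilinear form, and I, J, K ∈ End(V) satisfying the quaternion relations, with g K-invariant. Then the kernel of Ω₊ in its second argument, {w ∈ V : Ω₊(v,w) = 0 for all v ∈ V}, equals the (-i)-eigenspace {w : I(w) = -i·w}, and the kernel of Ω₋ in its second argument equals the (+i)-eigenspace {w : I(w) = i·w}. -/
/-!
From `I ∘ I = J ∘ J = I ∘ J ∘ K = -1` one gets `J ∘ K = I` and hence `K = -(J ∘ I)`, so that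
`J w + c • K w = J (w - c • I w)` for every scalar `c`. Since `J` is invertible and `c² = -1`,
this vanishes exactly when `I w = -c • w`; taking `c = ±i` gives both eigenspaces. In finite
dimension a left-separating form is also right-separating, so the kernel of `Ω₊` (resp. `Ω₋`)
in its second argument is the set where `J w + i • K w` (resp. `J w - i • K w`) vanishes.
-/

namespace LinearMap

variable {R M : Type*} [CommRing R] [AddCommGroup M] [Module R M] {I J K : M →ₗ[R] M}

theorem comp_comp_eq_self_of_quaternion (hII : I ∘ₗ I = -id) (hIJK : I ∘ₗ (J ∘ₗ K) = -id) :
    J ∘ₗ K = I := by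
  have h : I ∘ₗ (I ∘ₗ (J ∘ₗ K)) = -I := by rw [hIJK, comp_neg, comp_id]
  rwa [← comp_assoc, hII, neg_comp, id_comp, neg_inj] at h

theorem comp_eq_neg_of_quaternion (hII : I ∘ₗ I = -id) (hJJ : J ∘ₗ J = -id)
    (hIJK : I ∘ₗ (J ∘ₗ K) = -id) : J ∘ₗ I = -K := by
  rw [← comp_comp_eq_self_of_quaternion hII hIJK, ← comp_assoc, hJJ, neg_comp, id_comp]

theorem injective_of_comp_self_eq_neg_id (hJJ : J ∘ₗ J = -id) : Function.Injective J :=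
  fun a b hab => by
    have h : (J ∘ₗ J) a = (J ∘ₗ J) b := by rw [comp_apply, comp_apply, hab]
    rwa [hJJ, neg_apply, neg_apply, id_apply, id_apply, neg_inj] at h

theorem add_smul_eq_zero_iff_of_quaternion (hII : I ∘ₗ I = -id) (hJJ : J ∘ₗ J = -id)
    (hIJK : I ∘ₗ (J ∘ₗ K) = -id) {c : R} (hc : c * c = -1) (w : M) :
    J w + c • K w = 0 ↔ I w = -(c • w) := by
  have hK : K w = -J (I w) := by simp [← comp_apply, comp_eq_neg_of_quaternion hII hJJ hIJK]
  have hfactor : J w + c • K w = J (w - c • I w) := by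
    rw [hK, map_sub, map_smul, smul_neg, sub_eq_add_neg]
  rw [hfactor, map_eq_zero_iff J (injective_of_comp_self_eq_neg_id hJJ), sub_eq_zero]
  constructor
  · intro h
    calc I w = -((c * c) • I w) := by rw [hc, neg_one_smul, neg_neg]
      _ = -(c • w) := by rw [mul_smul, ← h]
  · intro h
    calc w = -((c * c) • w) := by rw [hc, neg_one_smul, neg_neg]
      _ = c • I w := by rw [h, smul_neg, mul_smul]

end LinearMap

theorem stmt_4_general (V : Type*) [AddCommGroup V] [Module ℂ V] [FiniteDimensional ℂ V]
    (g : V →ₗ[ℂ] V →ₗ[ℂ] ℂ) (I J K : V →ₗ[ℂ] V)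
    (hII : I ∘ₗ I = -LinearMap.id) (hJJ : J ∘ₗ J = -LinearMap.id)
    (hIJK : I ∘ₗ (J ∘ₗ K) = -LinearMap.id)
    (hnd : ∀ v, (∀ w, g v w = 0) → v = 0) :
    {w : V | ∀ v, g v (J w + Complex.I • K w) = 0} = {w : V | I w = -(Complex.I • w)} ∧
    {w : V | ∀ v, g v (J w - Complex.I • K w) = 0} = {w : V | I w = Complex.I • w} := by
  have hright : ∀ x, (∀ v, g v x = 0) ↔ x = 0 := fun x =>
    ⟨(LinearMap.BilinForm.Nondegenerate.ofSeparatingLeft (B := g) hnd).2 x,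
      fun hx v => by rw [hx, map_zero]⟩
  have hplus := LinearMap.add_smul_eq_zero_iff_of_quaternion hII hJJ hIJK Complex.I_mul_I
  have hminus := LinearMap.add_smul_eq_zero_iff_of_quaternion hII hJJ hIJK
    (c := -Complex.I) (by rw [neg_mul_neg, Complex.I_mul_I])
  constructor
  · ext w
    simp only [Set.mem_ofPred_eq, hright, hplus]
  · ext w
    simp only [Set.mem_ofPred_eq, hright, sub_eq_add_neg, ← neg_smul, hminus, neg_neg]

/-- For a finite-dimensional complex vector space with a nondegenerate bilinear
form `g` and endomorphisms `I, J, K` satisfying the quaternion relations, with `g` K-invariant,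
the kernel of `Ω₊` in its second argument equals the `(-i)`-eigenspace of `I`, and the kernel
of `Ω₋` in its second argument equals the `(+i)`-eigenspace of `I`. -/
theorem stmt_4 (V : Type*) [AddCommGroup V] [Module ℂ V] [FiniteDimensional ℂ V]
    (g : V →ₗ[ℂ] V →ₗ[ℂ] ℂ) (I J K : V →ₗ[ℂ] V)
    (hII : I ∘ₗ I = -LinearMap.id) (hJJ : J ∘ₗ J = -LinearMap.id)
    (hKK : K ∘ₗ K = -LinearMap.id) (hIJK : I ∘ₗ (J ∘ₗ K) = -LinearMap.id)
    (hnd : ∀ v, (∀ w, g v w = 0) → v = 0)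
    (hKinv : ∀ v w, g (K v) (K w) = g v w) :
    {w : V | ∀ v, g v (J w + Complex.I • K w) = 0} = {w : V | I w = -(Complex.I • w)} ∧
    {w : V | ∀ v, g v (J w - Complex.I • K w) = 0} = {w : V | I w = Complex.I • w} :=
  stmt_4_general V g I J K hII hJJ hIJK hnd
end

section
/- In the standard model with skew-symmetric ω, the forms Ω₊ and Ω₋ are given explicitly by Ω₋((a,b),(a',b')) = 2·Σ_{i,j} ω_{i j}·b_i·b'_j and Ω₊((a,b),(a',b')) = 2·Σ_{i,j} ω_{i j}·a_i·a'_j. In particular, Ω₋((a,b),(a',b')) depends only on the second (base) components b, b' and vanishes whenever either argument is vertical (of the form (a, 0)), while Ω₊ depends only on the first (vertical) components a, a'. -/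
/-!
Since `i² = -1`, the combinations `J ∓ i·K` each kill one component: `J(a',b') - i·K(a',b') = -2·(b', 0)`
and `J(a',b') + i·K(a',b') = 2·(0, a')`. Pairing against these with `g`, which couples first components
with second ones, leaves `2·Σ ω_{ij} b_i b'_j` and `2·Σ ω_{ij} a_i a'_j` respectively.
-/

open Finset

section Pairing

variable {R ι : Type*} [CommRing R] [Fintype ι]

def pairing (ω : Matrix ι ι R) (x y : (ι → R) × (ι → R)) : R :=
  ∑ i, ∑ j, ω i j * (x.1 i * y.2 j - x.2 i * y.1 j)

variable (ω : Matrix ι ι R) (x : (ι → R) × (ι → R))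

theorem pairing_smul_right (s : R) (y : (ι → R) × (ι → R)) :
    pairing ω x (s • y) = s * pairing ω x y := by
  simp only [pairing, mul_sum, Prod.smul_fst, Prod.smul_snd, Pi.smul_apply, smul_eq_mul]
  exact sum_congr rfl fun i _ => sum_congr rfl fun j _ => by ring

theorem pairing_prod_zero_right (c : ι → R) :
    pairing ω x (c, 0) = -∑ i, ∑ j, ω i j * x.2 i * c j := by
  simp only [pairing, Pi.zero_apply, mul_zero, zero_sub, mul_neg, sum_neg_distrib, mul_assoc]

theorem pairing_zero_prod_right (c : ι → R) :
    pairing ω x (0, c) = ∑ i, ∑ j, ω i j * x.1 i * c j := by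
  simp only [pairing, Pi.zero_apply, mul_zero, sub_zero, mul_assoc]

end Pairing

section Rotation

variable {R ι : Type*} [CommRing R] {u : R} (hu : u * u = -1) (y : (ι → R) × (ι → R))
include hu

theorem rot_sub_smul_eq :
    (-y.2, y.1) - u • ((fun k => -u * y.2 k, fun k => -u * y.1 k) : (ι → R) × (ι → R)) =
      (-2 : R) • (y.2, 0) := by
  ext k <;> simp only [Prod.fst_sub, Prod.snd_sub, Prod.smul_fst, Prod.smul_snd, Pi.sub_apply,
    Pi.neg_apply, Pi.smul_apply, smul_eq_mul, Pi.zero_apply]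
  · linear_combination y.2 k * hu
  · linear_combination y.1 k * hu

theorem rot_add_smul_eq :
    (-y.2, y.1) + u • ((fun k => -u * y.2 k, fun k => -u * y.1 k) : (ι → R) × (ι → R)) =
      (2 : R) • (0, y.1) := by
  ext k <;> simp only [Prod.fst_add, Prod.snd_add, Prod.smul_fst, Prod.smul_snd, Pi.add_apply,
    Pi.neg_apply, Pi.smul_apply, smul_eq_mul, Pi.zero_apply]
  · linear_combination -y.2 k * hu
  · linear_combination -y.1 k * hu

end Rotation

theorem stmt_9_general (n : ℕ) (ω : Matrix (Fin n) (Fin n) ℂ)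
    (g : ((Fin n → ℂ) × (Fin n → ℂ)) → ((Fin n → ℂ) × (Fin n → ℂ)) → ℂ)
    (hg : ∀ x y, g x y = ∑ i, ∑ j, ω i j * (x.1 i * y.2 j - x.2 i * y.1 j))
    (J K : ((Fin n → ℂ) × (Fin n → ℂ)) → ((Fin n → ℂ) × (Fin n → ℂ)))
    (hJ : ∀ p, J p = (-p.2, p.1))
    (hK : ∀ p, K p = (fun i => -Complex.I * p.2 i, fun i => -Complex.I * p.1 i)) :
    (∀ x y, g x (J y - Complex.I • K y) = 2 * ∑ i, ∑ j, ω i j * x.2 i * y.2 j) ∧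
    (∀ x y, g x (J y + Complex.I • K y) = 2 * ∑ i, ∑ j, ω i j * x.1 i * y.1 j) ∧
    (∀ x x' y y' : (Fin n → ℂ) × (Fin n → ℂ), x.2 = x'.2 → y.2 = y'.2 →
      g x (J y - Complex.I • K y) = g x' (J y' - Complex.I • K y')) ∧
    (∀ (a : Fin n → ℂ) (y : (Fin n → ℂ) × (Fin n → ℂ)),
      g (a, 0) (J y - Complex.I • K y) = 0 ∧ g y (J (a, 0) - Complex.I • K (a, 0)) = 0) ∧
    (∀ x x' y y' : (Fin n → ℂ) × (Fin n → ℂ), x.1 = x'.1 → y.1 = y'.1 →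
      g x (J y + Complex.I • K y) = g x' (J y' + Complex.I • K y')) := by
  have hminus : ∀ x y, g x (J y - Complex.I • K y) = 2 * ∑ i, ∑ j, ω i j * x.2 i * y.2 j := by
    intro x y
    rw [hg, ← pairing, hJ, hK, rot_sub_smul_eq Complex.I_mul_I, pairing_smul_right,
      pairing_prod_zero_right]
    ring
  have hplus : ∀ x y, g x (J y + Complex.I • K y) = 2 * ∑ i, ∑ j, ω i j * x.1 i * y.1 j := by
    intro x y
    rw [hg, ← pairing, hJ, hK, rot_add_smul_eq Complex.I_mul_I, pairing_smul_right,
      pairing_zero_prod_right]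
  refine ⟨hminus, hplus, fun x x' y y' hx hy => by rw [hminus, hminus, hx, hy],
    fun a y => ⟨by simp [hminus], by simp [hminus]⟩,
    fun x x' y y' hx hy => by rw [hplus, hplus, hx, hy]⟩

/-- In the standard model with skew-symmetric `ω`, the forms
`Ω₋(x,y) = g(x, J(y) - i·K(y))` and `Ω₊(x,y) = g(x, J(y) + i·K(y))` are given explicitly by
`Ω₋((a,b),(a',b')) = 2·Σ ω i j · b i · b' j` and `Ω₊((a,b),(a',b')) = 2·Σ ω i j · a i · a' j`.
In particular `Ω₋` depends only on the second (base) components and vanishes if either argument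
is vertical (of the form `(a, 0)`), while `Ω₊` depends only on the first (vertical) components. -/
theorem stmt_9 (n : ℕ) (hn : 1 ≤ n) (ω : Matrix (Fin n) (Fin n) ℂ)
    (hskew : ∀ i j, ω i j = -ω j i)
    (g : ((Fin n → ℂ) × (Fin n → ℂ)) → ((Fin n → ℂ) × (Fin n → ℂ)) → ℂ)
    (hg : ∀ x y, g x y = ∑ i, ∑ j, ω i j * (x.1 i * y.2 j - x.2 i * y.1 j))
    (I J K : ((Fin n → ℂ) × (Fin n → ℂ)) → ((Fin n → ℂ) × (Fin n → ℂ)))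
    (hI : ∀ p, I p = (fun i => Complex.I * p.1 i, fun i => -Complex.I * p.2 i))
    (hJ : ∀ p, J p = (-p.2, p.1))
    (hK : ∀ p, K p = (fun i => -Complex.I * p.2 i, fun i => -Complex.I * p.1 i)) :
    (∀ x y, g x (J y - Complex.I • K y) = 2 * ∑ i, ∑ j, ω i j * x.2 i * y.2 j) ∧
    (∀ x y, g x (J y + Complex.I • K y) = 2 * ∑ i, ∑ j, ω i j * x.1 i * y.1 j) ∧
    (∀ x x' y y' : (Fin n → ℂ) × (Fin n → ℂ), x.2 = x'.2 → y.2 = y'.2 →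
      g x (J y - Complex.I • K y) = g x' (J y' - Complex.I • K y')) ∧
    (∀ (a : Fin n → ℂ) (y : (Fin n → ℂ) × (Fin n → ℂ)),
      g (a, 0) (J y - Complex.I • K y) = 0 ∧ g y (J (a, 0) - Complex.I • K (a, 0)) = 0) ∧
    (∀ x x' y y' : (Fin n → ℂ) × (Fin n → ℂ), x.1 = x'.1 → y.1 = y'.1 →
      g x (J y + Complex.I • K y) = g x' (J y' + Complex.I • K y')) :=
  stmt_9_general n ω g hg J K hJ hK
end

section
/- Let η ∈ Matrix (Fin n) (Fin n) ℂ and let W : (Fin n → ℂ) × (Fin n → ℂ) → ℂ be infinitely ℂ-differentiable. Assume: (i) W is odd in θ, i.e. W(z, -θ) = -W(z, θ) for all z, θ; and (ii) for all i, j, k, the function ∂_{θ_k}[ ∂_{θ_i}∂_{z_j}W - ∂_{θ_j}∂_{z_i}W - Σ_{p,q} η_{p q}·(∂_{θ_i}∂_{θ_p}W)·(∂_{θ_j}∂_{θ_q}W) ] vanishes identically. Define W'(z, θ) = W(z, θ) - Σ_k θ_k·(∂_{θ_k}W)(z, 0). Then W' satisfies Plebański's second heavenly equation (for η): ∂_{θ_i}∂_{z_j}W'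 - ∂_{θ_j}∂_{z_i}W' = Σ_{p,q} η_{p q}·(∂_{θ_i}∂_{θ_p}W')·(∂_{θ_j}∂_{θ_q}W') identically for all i, j. -/
/-! Let `F_{ij}` be the difference of the two sides of the heavenly equation for `W`. By
hypothesis `F_{ij}` does not depend on `θ`, so `F_{ij}(z, θ) = F_{ij}(z, 0)`. Since `W` is odd in
`θ`, every `∂_{θ_p}W` is even in `θ`, so all second `θ`-derivatives of `W` vanish at `θ = 0`, and
`F_{ij}(z, 0) = (∂_{θ_i}∂_{z_j}W - ∂_{θ_j}∂_{z_i}W)(z, 0)`. Subtracting `Σ_k θ_k ∂_{θ_k}W(z, 0)`,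
which is linear in `θ`, leaves the second `θ`-derivatives unchanged and, by symmetry of second
derivatives, lowers `∂_{θ_i}∂_{z_j}W` by exactly its value at `θ = 0`; what remains is the
heavenly equation for `W'`. -/

open scoped BigOperators

/-- Directional derivative along the `i`-th coordinate of the first (`z`) factor. -/
noncomputable def dz {n : ℕ} (i : Fin n) (f : (Fin n → ℂ) × (Fin n → ℂ) → ℂ) :
    (Fin n → ℂ) × (Fin n → ℂ) → ℂ :=
  fun x => fderiv ℂ f x (Pi.single i 1, 0)

/-- Directional derivative along the `i`-th coordinate of the second (`θ`) factor. -/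
noncomputable def dθ {n : ℕ} (i : Fin n) (f : (Fin n → ℂ) × (Fin n → ℂ) → ℂ) :
    (Fin n → ℂ) × (Fin n → ℂ) → ℂ :=
  fun x => fderiv ℂ f x (0, Pi.single i 1)

/-- Plebański's second heavenly equation for the matrix `η`:
`∂_{θ_i}∂_{z_j}W - ∂_{θ_j}∂_{z_i}W = Σ_{p,q} η p q · (∂_{θ_i}∂_{θ_p}W)·(∂_{θ_j}∂_{θ_q}W)`. -/
def PlebanskiSecond {n : ℕ} (η : Matrix (Fin n) (Fin n) ℂ)
    (W : (Fin n → ℂ) × (Fin n → ℂ) → ℂ) : Prop :=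
  ∀ i j x, dθ i (dz j W) x - dθ j (dz i W) x =
    ∑ p, ∑ q, η p q * dθ i (dθ p W) x * dθ j (dθ q W) x

section
variable {n : ℕ}
local notation "E" => (Fin n → ℂ) × (Fin n → ℂ)

theorem ContDiff.dz {f : E → ℂ} {k m : WithTop ℕ∞} (hf : ContDiff ℂ k f) (hmk : m + 1 ≤ k)
    (i : Fin n) : ContDiff ℂ m (dz i f) :=
  (hf.fderiv_right hmk).clm_apply contDiff_const

theorem ContDiff.dθ {f : E → ℂ} {k m : WithTop ℕ∞} (hf : ContDiff ℂ k f) (hmk : m + 1 ≤ k)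
    (i : Fin n) : ContDiff ℂ m (dθ i f) :=
  (hf.fderiv_right hmk).clm_apply contDiff_const

theorem dz_sub {f g : E → ℂ} (hf : Differentiable ℂ f) (hg : Differentiable ℂ g) (i : Fin n) :
    dz i (fun x => f x - g x) = fun x => dz i f x - dz i g x := by
  ext x
  unfold dz
  rw [fderiv_fun_sub (hf x) (hg x)]
  rfl

theorem dθ_sub {f g : E → ℂ} (hf : Differentiable ℂ f) (hg : Differentiable ℂ g) (i : Fin n) :
    dθ i (fun x => f x - g x) = fun x => dθ i f x - dθ i g x := by
  ext x
  unfold dθ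
  rw [fderiv_fun_sub (hf x) (hg x)]
  rfl

theorem fderiv_sum_snd_mul_apply {φ : Fin n → (Fin n → ℂ) → ℂ} (hφ : ∀ k, Differentiable ℂ (φ k))
    (x v : E) :
    fderiv ℂ (fun y : E => ∑ k, y.2 k * φ k y.1) x v =
      ∑ k, (x.2 k * fderiv ℂ (φ k) x.1 v.1 + v.2 k * φ k x.1) := by
  have hφx : ∀ k, HasFDerivAt (fun y : E => φ k y.1)
      ((fderiv ℂ (φ k) x.1).comp (.fst ℂ _ _)) x :=
    fun k => (hφ k x.1).hasFDerivAt.comp x hasFDerivAt_fst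
  have hθ : ∀ k, HasFDerivAt (fun y : E => y.2 k)
      ((ContinuousLinearMap.proj k).comp (.snd ℂ _ _)) x :=
    fun k => ((ContinuousLinearMap.proj k).comp
      (ContinuousLinearMap.snd ℂ (Fin n → ℂ) (Fin n → ℂ))).hasFDerivAt
  rw [(HasFDerivAt.fun_sum fun k _ => (hθ k).fun_mul (hφx k)).fderiv]
  simp [add_comm, mul_comm]

theorem differentiable_sum_snd_mul {φ : Fin n → (Fin n → ℂ) → ℂ}
    (hφ : ∀ k, Differentiable ℂ (φ k)) : Differentiable ℂ (fun y : E => ∑ k, y.2 k * φ k y.1) := by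
  fun_prop

theorem dθ_sum_snd_mul {φ : Fin n → (Fin n → ℂ) → ℂ} (hφ : ∀ k, Differentiable ℂ (φ k))
    (i : Fin n) : dθ i (fun y : E => ∑ k, y.2 k * φ k y.1) = fun x => φ i x.1 := by
  ext x
  simp [dθ, fderiv_sum_snd_mul_apply hφ, Pi.single_apply]

theorem dz_sum_snd_mul {φ : Fin n → (Fin n → ℂ) → ℂ} (hφ : ∀ k, Differentiable ℂ (φ k))
    (j : Fin n) : dz j (fun y : E => ∑ k, y.2 k * φ k y.1) =
      fun x => ∑ k, x.2 k * fderiv ℂ (φ k) x.1 (Pi.single j 1) := by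
  ext x
  simp [dz, fderiv_sum_snd_mul_apply hφ]

theorem dθ_comp_fst {g : (Fin n → ℂ) → ℂ} (hg : Differentiable ℂ g) (i : Fin n) :
    dθ i (fun x : E => g x.1) = 0 := by
  ext x
  unfold dθ
  rw [HasFDerivAt.fderiv (f := fun x : E => g x.1) ((hg x.1).hasFDerivAt.comp x hasFDerivAt_fst)]
  simp

theorem fderiv_comp_prodMk_zero_single {f : E → ℂ} {z : Fin n → ℂ}
    (hf : DifferentiableAt ℂ f (z, 0)) (j : Fin n) :
    fderiv ℂ (fun z => f (z, 0)) z (Pi.single j 1) = dz j f (z, 0) := by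
  rw [HasFDerivAt.fderiv (f := fun z => f (z, 0))
    (hf.hasFDerivAt.comp z (hasFDerivAt_prodMk_left z 0))]
  rfl

theorem dθ_dz_comm {f : E → ℂ} (hf : ContDiff ℂ 2 f) (i j : Fin n) :
    dθ i (dz j f) = dz j (dθ i f) := by
  ext x
  have hd : DifferentiableAt ℂ (fderiv ℂ f) x :=
    ((hf.fderiv_right (m := 1) le_rfl).differentiable one_ne_zero).differentiableAt
  have key : ∀ u v : E, fderiv ℂ (fun y => fderiv ℂ f y u) x v = fderiv ℂ (fderiv ℂ f) x v u := by
    intro u v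
    rw [fderiv_clm_apply hd (differentiableAt_const u)]
    simp
  unfold dz dθ
  rw [key, key]
  exact hf.contDiffAt.isSymmSndFDerivAt (by simp) _ _

theorem apply_eq_of_dθ_eq_zero {f : E → ℂ} (hf : Differentiable ℂ f) (h : ∀ k y, dθ k f y = 0)
    (x : E) : f x = f (x.1, 0) := by
  have hslice : ∀ t, HasFDerivAt (fun t => f (x.1, t))
      ((fderiv ℂ f (x.1, t)).comp (.inr ℂ _ _)) t :=
    fun t => (hf _).hasFDerivAt.comp t (hasFDerivAt_prodMk_right x.1 t)
  have hzero : ∀ t, fderiv ℂ (fun t => f (x.1, t)) t = 0 := by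
    intro t
    rw [(hslice t).fderiv]
    refine ContinuousLinearMap.coe_injective ((Pi.basisFun ℂ (Fin n)).ext fun k => ?_)
    simpa [dθ] using h k (x.1, t)
  exact is_const_of_fderiv_eq_zero (fun t => (hslice t).differentiableAt) hzero x.2 0

theorem dθ_apply_neg_of_apply_neg {f : E → ℂ} {c : ℂ} (hf : ∀ z θ, f (z, -θ) = c * f (z, θ))
    (i : Fin n) (z θ : Fin n → ℂ) : dθ i f (z, -θ) = -c * dθ i f (z, θ) := by
  let R : E ≃L[ℂ] E := (ContinuousLinearEquiv.refl ℂ _).prodCongr (ContinuousLinearEquiv.neg ℂ)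
  have hfR : f ∘ R = c • f := funext fun x => hf x.1 x.2
  have h := congrArg (fun f' => fderiv ℂ f' (z, θ) (0, Pi.single i 1)) hfR
  simp only [R.comp_right_fderiv, fderiv_const_smul_field] at h
  have hRx : R (z, θ) = (z, -θ) := rfl
  have hRv : R (0, Pi.single i 1) = -(0, Pi.single i 1) := by ext <;> simp [R]
  simp only [ContinuousLinearMap.comp_apply, ContinuousLinearEquiv.coe_coe, hRx, hRv, map_neg,
    Pi.smul_apply, FunLike.coe_smul, smul_eq_mul] at h
  unfold dθ
  linear_combination -h

theorem dθ_dθ_apply_zero_of_odd {f : E → ℂ} (hodd : ∀ z θ, f (z, -θ) = -f (z, θ))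
    (i p : Fin n) (z : Fin n → ℂ) : dθ i (dθ p f) (z, 0) = 0 := by
  have heven : ∀ z θ, dθ p f (z, -θ) = 1 * dθ p f (z, θ) := by
    intro z θ
    rw [dθ_apply_neg_of_apply_neg (c := -1) (fun z θ => by rw [hodd]; ring)]
    ring
  have h := dθ_apply_neg_of_apply_neg heven i z 0
  rw [neg_zero] at h
  linear_combination h / 2

section linearPart

variable {W : (Fin n → ℂ) × (Fin n → ℂ) → ℂ}

theorem dθ_sub_linearPart (hW : ContDiff ℂ 2 W) (p : Fin n) :
    dθ p (fun x : E => W x - ∑ k, x.2 k * dθ k W (x.1, 0)) =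
      fun x => dθ p W x - dθ p W (x.1, 0) := by
  have hdθ : ∀ k, Differentiable ℂ (dθ k W) := fun k =>
    (hW.dθ (m := 1) (by norm_num) k).differentiable one_ne_zero
  have hφ : ∀ k, Differentiable ℂ (fun z => dθ k W (z, 0)) := fun k => by fun_prop
  rw [dθ_sub (hW.differentiable two_ne_zero) (differentiable_sum_snd_mul hφ), dθ_sum_snd_mul hφ]

theorem dz_sub_linearPart (hW : ContDiff ℂ 2 W) (j : Fin n) :
    dz j (fun x : E => W x - ∑ k, x.2 k * dθ k W (x.1, 0)) =
      fun x => dz j W x - ∑ k, x.2 k * dz j (dθ k W) (x.1, 0) := by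
  have hdθ : ∀ k, Differentiable ℂ (dθ k W) := fun k =>
    (hW.dθ (m := 1) (by norm_num) k).differentiable one_ne_zero
  have hφ : ∀ k, Differentiable ℂ (fun z => dθ k W (z, 0)) := fun k => by fun_prop
  rw [dz_sub (hW.differentiable two_ne_zero) (differentiable_sum_snd_mul hφ), dz_sum_snd_mul hφ]
  simp only [fderiv_comp_prodMk_zero_single (hdθ _ _)]

theorem dθ_dθ_sub_linearPart (hW : ContDiff ℂ 2 W) (i p : Fin n) :
    dθ i (dθ p (fun x : E => W x - ∑ k, x.2 k * dθ k W (x.1, 0))) = dθ i (dθ p W) := by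
  have hdθ : Differentiable ℂ (dθ p W) :=
    (hW.dθ (m := 1) (by norm_num) p).differentiable one_ne_zero
  have hφ : Differentiable ℂ (fun z => dθ p W (z, 0)) := by fun_prop
  rw [dθ_sub_linearPart hW, dθ_sub hdθ (g := fun x => dθ p W (x.1, 0)) (by fun_prop),
    dθ_comp_fst hφ]
  simp

theorem dθ_dz_sub_linearPart (hW : ContDiff ℂ 3 W) (i j : Fin n) (x : E) :
    dθ i (dz j (fun x : E => W x - ∑ k, x.2 k * dθ k W (x.1, 0))) x =
      dθ i (dz j W) x - dθ i (dz j W) (x.1, 0) := by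
  have hdz : Differentiable ℂ (dz j W) :=
    (hW.dz (m := 2) (by norm_num) j).differentiable two_ne_zero
  have hdzθ : ∀ k, Differentiable ℂ (dz j (dθ k W)) := fun k =>
    ((hW.dθ (m := 2) (by norm_num) k).dz (m := 1) (by norm_num) j).differentiable one_ne_zero
  have hψ : ∀ k, Differentiable ℂ (fun z => dz j (dθ k W) (z, 0)) := fun k => by fun_prop
  rw [dz_sub_linearPart (hW.of_le (by norm_num)), dθ_sub hdz (differentiable_sum_snd_mul hψ),
    dθ_sum_snd_mul hψ, dθ_dz_comm (hW.of_le (by norm_num))]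

end linearPart

end

/-- If `W` is smooth, odd in `θ`, and satisfies the "θ-derivative" version of the
heavenly equation (i.e. the left-hand side minus the right-hand side is annihilated by every
`∂_{θ_k}`), then `W'(z,θ) = W(z,θ) - Σ_k θ_k·(∂_{θ_k}W)(z,0)` satisfies Plebański's second
heavenly equation itself. -/
theorem stmt_10 {n : ℕ} (η : Matrix (Fin n) (Fin n) ℂ)
    (W : (Fin n → ℂ) × (Fin n → ℂ) → ℂ)
    (hW : ContDiff ℂ ⊤ W)
    (hodd : ∀ z θ, W (z, -θ) = -W (z, θ))
    (heq : ∀ i j k x, dθ k (fun y => dθ i (dz j W) y - dθ j (dz i W) y -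
        ∑ p, ∑ q, η p q * dθ i (dθ p W) y * dθ j (dθ q W) y) x = 0) :
    PlebanskiSecond η (fun x => W x - ∑ k, x.2 k * dθ k W (x.1, 0)) := by
  have hW3 : ContDiff ℂ 3 W := hW.of_le le_top
  have hdθdz : ∀ a b, Differentiable ℂ (dθ a (dz b W)) := fun a b =>
    ((hW3.dz (m := 2) (by norm_num) b).dθ (m := 1) (by norm_num) a).differentiable one_ne_zero
  have hdθdθ : ∀ a b, Differentiable ℂ (dθ a (dθ b W)) := fun a b =>
    ((hW3.dθ (m := 2) (by norm_num) b).dθ (m := 1) (by norm_num) a).differentiable one_ne_zero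
  intro i j x
  have hconst := apply_eq_of_dθ_eq_zero (by fun_prop) (heq i j) x
  simp only [dθ_dθ_apply_zero_of_odd hodd, mul_zero, Finset.sum_const_zero, sub_zero] at hconst
  rw [dθ_dz_sub_linearPart hW3, dθ_dz_sub_linearPart hW3]
  simp only [dθ_dθ_sub_linearPart (hW3.of_le (by norm_num))]
  linear_combination hconst
end

section
/- Let U ⊆ (Fin n → ℂ) be a nonempty convex open set and let c_{j k} : U → ℂ (j, k ∈ Fin n) be ℂ-analytic functions satisfying c_{j k} = c_{k j} and ∂_i c_{j k} = ∂_j c_{i k} on U for all i, j, k (where ∂_i denotes the directional derivative along the standard basis vector e_i). Then there exists a ℂ-analytic function W : U → ℂ with ∂_j ∂_k W = c_{j k} on U for all j, k. -/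
/-!
Fix `x₀ ∈ U`. Differentiating under the integral sign, the radial primitive
`g x = ∫₀¹ ω (x₀ + t • (x - x₀)) (x - x₀) dt` of a holomorphic 1-form `ω` has derivative
`∫₀¹ (ω (γ t) + t • Dω (γ t) (·) (x - x₀)) dt` along `γ t = x₀ + t • (x - x₀)`. When `Dω` is
symmetric this integrand is `d/dt (t • ω (γ t))`, so the integral is `ω x`. The domination needed
to differentiate under the integral comes from the Cauchy estimate (Schwarz lemma) on a thickening
of a compact subset of `U`.

Applied to the 1-forms `∑ j, c j k dz_j` this gives `g k` with `∂_j g k = c j k`; the symmetry of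
`c` makes `∑ k, g k dz_k` closed, and a second application gives `W`.
-/

open Set Metric MeasureTheory Topology
open scoped Interval

section CauchyEstimate

variable {E F : Type*} [NormedAddCommGroup E] [NormedSpace ℂ E] [ProperSpace E]
  [NormedAddCommGroup F] [NormedSpace ℂ F]

theorem IsCompact.exists_bound_norm_fderiv {f : E → F} {U K : Set E} (hK : IsCompact K)
    (hU : IsOpen U) (hKU : K ⊆ U) (hf : DifferentiableOn ℂ f U) :
    ∃ C, ∀ x ∈ K, ‖fderiv ℂ f x‖ ≤ C := by
  obtain ⟨δ, hδ, hδU⟩ := hK.exists_cthickening_subset_open hU hKU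
  obtain ⟨M, hM⟩ := hK.cthickening.exists_bound_of_continuousOn (hf.continuousOn.mono hδU)
  refine ⟨(M + M) / δ, fun x hx => Complex.norm_fderiv_le_div_of_mapsTo_ball ?_ ?_ hδ⟩
  · have hball : ball x δ ⊆ cthickening δ K :=
      ball_subset_closedBall.trans (closedBall_subset_cthickening hx δ)
    exact hf.mono (hball.trans hδU)
  · intro y hy
    have hy' : y ∈ cthickening δ K := closedBall_subset_cthickening hx δ (ball_subset_closedBall hy)
    rw [mem_closedBall, dist_eq_norm]
    exact (norm_sub_le _ _).trans (add_le_add (hM y hy') (hM x (self_subset_cthickening K hx)))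

end CauchyEstimate

section Poincare

variable {E : Type*} [NormedAddCommGroup E] [NormedSpace ℂ E]
  {ω : E → E →L[ℂ] ℂ} {U : Set E} {x₀ x : E}

noncomputable def radialPrimitive (ω : E → E →L[ℂ] ℂ) (x₀ x : E) : ℂ :=
  ∫ t in (0:ℝ)..1, ω (x₀ + t • (x - x₀)) (x - x₀)

noncomputable def radialPrimitiveDeriv (ω : E → E →L[ℂ] ℂ) (x₀ x : E) (t : ℝ) : E →L[ℂ] ℂ :=
  ω (x₀ + t • (x - x₀)) + t • (fderiv ℂ ω (x₀ + t • (x - x₀))).flip (x - x₀)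

theorem hasFDerivAt_radialPrimitive_integrand {t : ℝ}
    (hω : DifferentiableAt ℂ ω (x₀ + t • (x - x₀))) :
    HasFDerivAt (fun y => ω (x₀ + t • (y - x₀)) (y - x₀)) (radialPrimitiveDeriv ω x₀ x t) x := by
  have hsub : HasFDerivAt (fun y : E => y - x₀) (ContinuousLinearMap.id ℂ E) x :=
    (hasFDerivAt_id x).sub_const x₀
  have hsegment := (hsub.const_smul t).const_add x₀
  refine ((hω.hasFDerivAt.comp x hsegment).clm_apply hsub).congr_fderiv ?_
  ext v
  simp [radialPrimitiveDeriv, mul_sub]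

theorem hasDerivAt_smul_comp_radial {t : ℝ} (hω : DifferentiableAt ℂ ω (x₀ + t • (x - x₀)))
    (hsymm : ∀ v w, fderiv ℂ ω (x₀ + t • (x - x₀)) v w = fderiv ℂ ω (x₀ + t • (x - x₀)) w v) :
    HasDerivAt (fun s : ℝ => s • ω (x₀ + s • (x - x₀))) (radialPrimitiveDeriv ω x₀ x t) t := by
  have hsegment : HasDerivAt (fun s : ℝ => x₀ + s • (x - x₀)) (x - x₀) t := by
    simpa using ((hasDerivAt_id t).smul_const (x - x₀)).const_add x₀
  refine ((hasDerivAt_id t).smul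
    ((hω.hasFDerivAt.restrictScalars ℝ).comp_hasDerivAt t hsegment)).congr_deriv ?_
  ext v
  simp [radialPrimitiveDeriv, hsymm, add_comm]

variable [FiniteDimensional ℂ E]

theorem exists_bound_radialPrimitiveDeriv (hconv : Convex ℝ U) (hU : IsOpen U) (hx₀ : x₀ ∈ U)
    (hω : DifferentiableOn ℂ ω U) (hx : x ∈ U) :
    ∃ ε > 0, closedBall x ε ⊆ U ∧
      ∃ C, ∀ t ∈ Icc (0:ℝ) 1, ∀ y ∈ closedBall x ε, ‖radialPrimitiveDeriv ω x₀ y t‖ ≤ C := by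
  obtain ⟨ε, hε, hball⟩ := nhds_basis_closedBall.mem_iff.1 (hU.mem_nhds hx)
  set K := (fun p : ℝ × E => x₀ + p.1 • (p.2 - x₀)) '' (Icc 0 1 ×ˢ closedBall x ε)
  have hK : IsCompact K := (isCompact_Icc.prod (isCompact_closedBall x ε)).image (by fun_prop)
  have hKU : K ⊆ U := by
    rintro _ ⟨⟨t, y⟩, ⟨ht, hy⟩, rfl⟩
    exact hconv.add_smul_sub_mem hx₀ (hball hy) ht
  obtain ⟨A, hA⟩ := hK.exists_bound_of_continuousOn (hω.continuousOn.mono hKU)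
  obtain ⟨B, hB⟩ := hK.exists_bound_norm_fderiv hU hKU hω
  refine ⟨ε, hε, hball, A + B * (ε + ‖x - x₀‖), fun t ht y hy => ?_⟩
  have hγ : x₀ + t • (y - x₀) ∈ K := ⟨(t, y), ⟨ht, hy⟩, rfl⟩
  have hy₀ : ‖y - x₀‖ ≤ ε + ‖x - x₀‖ :=
    (norm_sub_le_norm_sub_add_norm_sub y x x₀).trans (by gcongr; exact mem_closedBall_iff_norm.1 hy)
  have ht₁ : ‖t‖ ≤ 1 := by rw [Real.norm_of_nonneg ht.1]; exact ht.2
  calc ‖radialPrimitiveDeriv ω x₀ y t‖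
      ≤ ‖ω (x₀ + t • (y - x₀))‖ + ‖t‖ * (‖fderiv ℂ ω (x₀ + t • (y - x₀))‖ * ‖y - x₀‖) := by
        refine (norm_add_le _ _).trans (add_le_add le_rfl ?_)
        rw [norm_smul, ← ContinuousLinearMap.opNorm_flip]
        gcongr
        exact ContinuousLinearMap.le_opNorm _ _
    _ ≤ A + 1 * (B * (ε + ‖x - x₀‖)) := by
        have hB0 : 0 ≤ B := (norm_nonneg _).trans (hB _ hγ)
        gcongr
        exacts [hA _ hγ, hB _ hγ]
    _ = A + B * (ε + ‖x - x₀‖) := by ring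

theorem aestronglyMeasurable_radialPrimitiveDeriv (hconv : Convex ℝ U) (hx₀ : x₀ ∈ U)
    (hω : ContinuousOn ω U) (hx : x ∈ U) :
    AEStronglyMeasurable (radialPrimitiveDeriv ω x₀ x) (volume.restrict (Ι 0 1)) := by
  borelize E
  have hsegment : Continuous fun t : ℝ => x₀ + t • (x - x₀) := by fun_prop
  have hΙ : Ι (0:ℝ) 1 ⊆ Icc 0 1 := uIoc_subset_uIcc.trans_eq (uIcc_of_le zero_le_one)
  refine AEStronglyMeasurable.add ?_ ?_
  · exact ((hω.comp hsegment.continuousOn fun t ht => hconv.add_smul_sub_mem hx₀ hx ht)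
      |>.aestronglyMeasurable measurableSet_Icc).mono_measure (Measure.restrict_mono hΙ le_rfl)
  · refine Measurable.aestronglyMeasurable ?_
    have hflip : Continuous fun L : E →L[ℂ] E →L[ℂ] ℂ => L.flip (x - x₀) :=
      (ContinuousLinearMap.flipₗᵢ ℂ E E ℂ).continuous.clm_apply continuous_const
    exact measurable_id.smul
      (hflip.measurable.comp ((measurable_fderiv ℂ ω).comp hsegment.measurable))

theorem hasFDerivAt_radialPrimitive (hconv : Convex ℝ U) (hU : IsOpen U) (hx₀ : x₀ ∈ U)
    (hω : DifferentiableOn ℂ ω U) (hx : x ∈ U) :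
    IntervalIntegrable (radialPrimitiveDeriv ω x₀ x) volume 0 1 ∧
      HasFDerivAt (radialPrimitive ω x₀) (∫ t in (0:ℝ)..1, radialPrimitiveDeriv ω x₀ x t) x := by
  obtain ⟨ε, hε, hball, C, hC⟩ := exists_bound_radialPrimitiveDeriv hconv hU hx₀ hω hx
  have hΙ : Ι (0:ℝ) 1 ⊆ Icc 0 1 := uIoc_subset_uIcc.trans_eq (uIcc_of_le zero_le_one)
  have hmeas := aestronglyMeasurable_radialPrimitiveDeriv hconv hx₀ hω.continuousOn hx
  have hint : IntervalIntegrable (radialPrimitiveDeriv ω x₀ x) volume 0 1 :=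
    intervalIntegrable_const.mono_fun' hmeas <| (ae_restrict_iff' measurableSet_uIoc).2 <|
      .of_forall fun t ht => hC t (hΙ ht) x (mem_closedBall_self hε.le)
  have hcont y (hy : y ∈ U) :
      ContinuousOn (fun t : ℝ => ω (x₀ + t • (y - x₀)) (y - x₀)) (Icc 0 1) :=
    (hω.continuousOn.comp (by fun_prop : Continuous fun t : ℝ => x₀ + t • (y - x₀)).continuousOn
      fun t ht => hconv.add_smul_sub_mem hx₀ hy ht).clm_apply continuousOn_const
  refine ⟨hint, intervalIntegral.hasFDerivAt_integral_of_dominated_of_fderiv_le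
    (bound := fun _ => C) (closedBall_mem_nhds x hε) ?_ ?_ hmeas ?_
    intervalIntegrable_const ?_⟩
  · filter_upwards [hU.mem_nhds hx] with y hy
    exact ((hcont y hy).aestronglyMeasurable measurableSet_Icc).mono_measure
      (Measure.restrict_mono hΙ le_rfl)
  · exact (hcont x hx).intervalIntegrable_of_Icc zero_le_one
  · exact .of_forall fun t ht y hy => hC t (hΙ ht) y hy
  · refine .of_forall fun t ht y hy => hasFDerivAt_radialPrimitive_integrand ?_
    exact hω.differentiableAt (hU.mem_nhds (hconv.add_smul_sub_mem hx₀ (hball hy) (hΙ ht)))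

theorem integral_radialPrimitiveDeriv (hconv : Convex ℝ U) (hU : IsOpen U) (hx₀ : x₀ ∈ U)
    (hω : DifferentiableOn ℂ ω U)
    (hsymm : ∀ y ∈ U, ∀ v w, fderiv ℂ ω y v w = fderiv ℂ ω y w v) (hx : x ∈ U) :
    ∫ t in (0:ℝ)..1, radialPrimitiveDeriv ω x₀ x t = ω x := by
  have hderiv : ∀ t ∈ uIcc (0:ℝ) 1,
      HasDerivAt (fun s : ℝ => s • ω (x₀ + s • (x - x₀))) (radialPrimitiveDeriv ω x₀ x t) t := by
    intro t ht
    rw [uIcc_of_le zero_le_one] at ht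
    have hγ := hconv.add_smul_sub_mem hx₀ hx ht
    exact hasDerivAt_smul_comp_radial (hω.differentiableAt (hU.mem_nhds hγ)) (hsymm _ hγ)
  rw [intervalIntegral.integral_eq_sub_of_hasDerivAt hderiv
    (hasFDerivAt_radialPrimitive hconv hU hx₀ hω hx).1]
  ext v
  simp

theorem Convex.exists_forall_hasFDerivAt_of_fderiv_symm (hconv : Convex ℝ U) (hU : IsOpen U)
    (hne : U.Nonempty) (hω : DifferentiableOn ℂ ω U)
    (hsymm : ∀ y ∈ U, ∀ v w, fderiv ℂ ω y v w = fderiv ℂ ω y w v) :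
    ∃ g : E → ℂ, ∀ x ∈ U, HasFDerivAt g (ω x) x := by
  obtain ⟨x₀, hx₀⟩ := hne
  refine ⟨radialPrimitive ω x₀, fun x hx => ?_⟩
  rw [← integral_radialPrimitiveDeriv hconv hU hx₀ hω hsymm hx]
  exact (hasFDerivAt_radialPrimitive hconv hU hx₀ hω hx).2

end Poincare

section Coordinates

theorem ContinuousLinearMap.apply_eq_sum_mul_apply_single {ι R : Type*} [Fintype ι] [DecidableEq ι]
    [CommSemiring R] [TopologicalSpace R] (L : (ι → R) →L[R] R) (v : ι → R) :
    L v = ∑ j, v j * L (Pi.single j 1) := by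
  conv_lhs => rw [← Finset.univ_sum_single v]
  rw [map_sum]
  refine Finset.sum_congr rfl fun j _ => ?_
  rw [← smul_eq_mul, ← L.map_smul, ← Pi.single_smul, smul_eq_mul, mul_one]

variable {n : ℕ} {f : Fin n → (Fin n → ℂ) → ℂ} {U : Set (Fin n → ℂ)} {x : Fin n → ℂ}

/-- The 1-form `∑ i, f i dzᵢ`. -/
noncomputable def coordForm (f : Fin n → (Fin n → ℂ) → ℂ) (x : Fin n → ℂ) :
    (Fin n → ℂ) →L[ℂ] ℂ :=
  ∑ i, f i x • ContinuousLinearMap.proj i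

theorem hasFDerivAt_coordForm (hf : ∀ i, DifferentiableAt ℂ (f i) x) :
    HasFDerivAt (coordForm f)
      (∑ i, (fderiv ℂ (f i) x).smulRight (ContinuousLinearMap.proj i : (Fin n → ℂ) →L[ℂ] ℂ)) x := by
  unfold coordForm
  exact .fun_sum fun i _ =>
    (hf i).hasFDerivAt.smul_const (ContinuousLinearMap.proj i : (Fin n → ℂ) →L[ℂ] ℂ)

theorem differentiableOn_coordForm (hf : ∀ i, DifferentiableOn ℂ (f i) U) (hU : IsOpen U) :
    DifferentiableOn ℂ (coordForm f) U := fun _ hx =>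
  (hasFDerivAt_coordForm fun i => (hf i).differentiableAt (hU.mem_nhds hx)).differentiableAt
    |>.differentiableWithinAt

theorem fderiv_coordForm_symm (hf : ∀ i, DifferentiableAt ℂ (f i) x)
    (hcl : ∀ i j, fderiv ℂ (f i) x (Pi.single j 1) = fderiv ℂ (f j) x (Pi.single i 1))
    (v w : Fin n → ℂ) : fderiv ℂ (coordForm f) x v w = fderiv ℂ (coordForm f) x w v := by
  have hexp i v : fderiv ℂ (f i) x v = ∑ j, v j * fderiv ℂ (f i) x (Pi.single j 1) :=
    (fderiv ℂ (f i) x).apply_eq_sum_mul_apply_single v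
  simp only [(hasFDerivAt_coordForm hf).fderiv, sum_apply, ContinuousLinearMap.smulRight_apply,
    smul_apply, ContinuousLinearMap.proj_apply, smul_eq_mul, hexp _ v, hexp _ w, Finset.sum_mul]
  rw [Finset.sum_comm]
  refine Finset.sum_congr rfl fun i _ => Finset.sum_congr rfl fun j _ => ?_
  rw [hcl]
  ring

theorem Convex.exists_fderiv_apply_single_eq (hconv : Convex ℝ U) (hU : IsOpen U)
    (hne : U.Nonempty) (hf : ∀ i, DifferentiableOn ℂ (f i) U)
    (hcl : ∀ i j, ∀ x ∈ U,
      fderiv ℂ (f i) x (Pi.single j 1) = fderiv ℂ (f j) x (Pi.single i 1)) :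
    ∃ g, DifferentiableOn ℂ g U ∧ ∀ j, ∀ x ∈ U, fderiv ℂ g x (Pi.single j 1) = f j x := by
  have hfx {x} (hx : x ∈ U) i : DifferentiableAt ℂ (f i) x :=
    (hf i).differentiableAt (hU.mem_nhds hx)
  obtain ⟨g, hg⟩ := hconv.exists_forall_hasFDerivAt_of_fderiv_symm hU hne
    (differentiableOn_coordForm hf hU) fun x hx => fderiv_coordForm_symm (hfx hx) (hcl · · x hx)
  refine ⟨g, fun x hx => (hg x hx).differentiableAt.differentiableWithinAt, fun j x hx => ?_⟩
  simp [(hg x hx).fderiv, coordForm, Pi.single_apply]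

end Coordinates

/-- On a nonempty convex open set `U ⊆ (Fin n → ℂ)`, given holomorphic functions
`c j k` with `c j k = c k j` and `∂_i c j k = ∂_j c i k` on `U`, there is a holomorphic function
`W` on `U` with `∂_j ∂_k W = c j k` on `U`. -/
theorem stmt_12 {n : ℕ} (U : Set (Fin n → ℂ)) (hne : U.Nonempty)
    (hconv : Convex ℝ U) (hopen : IsOpen U)
    (c : Fin n → Fin n → (Fin n → ℂ) → ℂ)
    (hdiff : ∀ j k, DifferentiableOn ℂ (c j k) U)
    (hsym : ∀ j k, c j k = c k j)
    (hclosed : ∀ i j k, ∀ x ∈ U,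
      fderiv ℂ (c j k) x (Pi.single i 1) = fderiv ℂ (c i k) x (Pi.single j 1)) :
    ∃ W : (Fin n → ℂ) → ℂ, DifferentiableOn ℂ W U ∧
      ∀ j k, ∀ x ∈ U,
        fderiv ℂ (fun y => fderiv ℂ W y (Pi.single k 1)) x (Pi.single j 1) = c j k x := by
  choose g hg hgc using fun k => hconv.exists_fderiv_apply_single_eq hopen hne
    (f := fun j => c j k) (fun j => hdiff j k) fun i j => hclosed j i k
  obtain ⟨W, hW, hWg⟩ := hconv.exists_fderiv_apply_single_eq hopen hne hg
    fun i j x hx => by rw [hgc i j x hx, hgc j i x hx, hsym]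
  refine ⟨W, hW, fun j k x hx => ?_⟩
  have hWk : (fun y => fderiv ℂ W y (Pi.single k 1)) =ᶠ[𝓝 x] g k :=
    Filter.eventually_of_mem (hopen.mem_nhds hx) (hWg k)
  rw [hWk.fderiv_eq, hgc k j x hx]
end

section
/- Let Γ = Fin n → ℤ with a ℤ-bilinear skew-symmetric form ⟨·,·⟩, let ℏ be a nonzero real number, and let B : A × A → A be a ℂ-bilinear map on A = AddMonoidAlgebra ℂ Γ satisfying B(x_α, x_β) = ((2/ℏ)·sin(ℏ·⟨α,β⟩/2))·x_{α+β} on the standard basis elements x_γ = single γ 1. Then B satisfies the Jacobi identity: B(B(f,g),h) + B(B(g,h),f) + B(B(h,f),g) = 0 for all f, g, h ∈ A. -/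
/-!
Bilinearity reduces the Jacobi identity to basis elements `x_a, x_b, x_c`, where each of the three
terms is a multiple of `x_{a+b+c}`. Writing `p = ⟨a,b⟩`, `q = ⟨b,c⟩`, `r = ⟨c,a⟩`, additivity and
skew-symmetry give `⟨a+b,c⟩ = q - r` (and cyclically), so the coefficient of `x_{a+b+c}` is
`φ(p) φ(q-r) + φ(q) φ(r-p) + φ(r) φ(p-q)` with `φ(t) = (2/ℏ) sin(ℏt/2)`, which vanishes by the
addition formula for `sin`.
-/

open AddMonoidAlgebra

theorem Real.sin_mul_sin_sub_add_cyclic (x y z : ℝ) :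
    Real.sin x * Real.sin (y - z) + Real.sin y * Real.sin (z - x)
      + Real.sin z * Real.sin (x - y) = 0 := by
  simp only [Real.sin_sub]
  ring

section Jacobiator

variable {R M : Type*} [CommSemiring R] [AddCommMonoid M] [Module R M]

def jacobiator (B : M →ₗ[R] M →ₗ[R] M) (x y z : M) : M :=
  B (B x y) z + B (B y z) x + B (B z x) y

variable (B : M →ₗ[R] M →ₗ[R] M)

theorem jacobiator_rotate (x y z : M) : jacobiator B x y z = jacobiator B y z x := by
  simp only [jacobiator]
  abel

theorem jacobiator_add_left (x₁ x₂ y z : M) :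
    jacobiator B (x₁ + x₂) y z = jacobiator B x₁ y z + jacobiator B x₂ y z := by
  simp only [jacobiator, map_add, LinearMap.add_apply]
  abel

theorem jacobiator_smul_left (r : R) (x y z : M) :
    jacobiator B (r • x) y z = r • jacobiator B x y z := by
  simp only [jacobiator, map_smul, LinearMap.smul_apply, smul_add]

end Jacobiator

section AddMonoidAlgebra

variable {k G : Type*} [CommSemiring k] [AddCommMonoid G]

theorem AddMonoidAlgebra.jacobiator_eq_zero_of_single_left (B : k[G] →ₗ[k] k[G] →ₗ[k] k[G])
    {g h : k[G]} (hB : ∀ a : G, jacobiator B (single a 1) g h = 0) (f : k[G]) :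
    jacobiator B f g h = 0 := by
  induction f using AddMonoidAlgebra.induction_linear with
  | zero => simp [jacobiator]
  | add f₁ f₂ h₁ h₂ => rw [jacobiator_add_left, h₁, h₂, add_zero]
  | single a r => rw [← mul_one r, ← smul_single', jacobiator_smul_left, hB, smul_zero]

theorem AddMonoidAlgebra.jacobiator_eq_zero_of_single (B : k[G] →ₗ[k] k[G] →ₗ[k] k[G])
    (hB : ∀ a b c : G, jacobiator B (single a 1) (single b 1) (single c 1) = 0)
    (f g h : k[G]) : jacobiator B f g h = 0 := by
  refine jacobiator_eq_zero_of_single_left B (fun a => ?_) f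
  rw [jacobiator_rotate]
  refine jacobiator_eq_zero_of_single_left B (fun b => ?_) g
  rw [jacobiator_rotate]
  refine jacobiator_eq_zero_of_single_left B (fun c => ?_) h
  rw [← jacobiator_rotate, ← jacobiator_rotate]
  exact hB a b c

theorem AddMonoidAlgebra.jacobiator_single_single_single
    (B : k[G] →ₗ[k] k[G] →ₗ[k] k[G]) (bform : G → G → ℤ)
    (hadd : ∀ a b c : G, bform (a + b) c = bform a c + bform b c)
    (hskew : ∀ a b : G, bform a b = -bform b a) (φ : ℤ → k)
    (hB : ∀ a b : G, B (single a 1) (single b 1) = φ (bform a b) • single (a + b) 1)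
    (a b c : G) :
    jacobiator B (single a 1) (single b 1) (single c 1) =
      (φ (bform a b) * φ (bform b c - bform c a) + φ (bform b c) * φ (bform c a - bform a b)
        + φ (bform c a) * φ (bform a b - bform b c)) • single (a + b + c) 1 := by
  have hab : bform (a + b) c = bform b c - bform c a := by rw [hadd, hskew a c]; ring
  have hbc : bform (b + c) a = bform c a - bform a b := by rw [hadd, hskew b a]; ring
  have hca : bform (c + a) b = bform a b - bform b c := by rw [hadd, hskew c b]; ring
  simp only [jacobiator, hB, map_smul, LinearMap.smul_apply, smul_smul, add_smul, hab, hbc, hca,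
    show b + c + a = a + b + c by abel, show c + a + b = a + b + c by abel]

end AddMonoidAlgebra

theorem stmt_16_general {n : ℕ}
    (bform : (Fin n → ℤ) → (Fin n → ℤ) → ℤ)
    (hadd : ∀ α β γ : Fin n → ℤ, bform (α + β) γ = bform α γ + bform β γ)
    (hskew : ∀ α β : Fin n → ℤ, bform α β = -bform β α)
    (ℏ : ℝ)
    (B : AddMonoidAlgebra ℂ (Fin n → ℤ) →ₗ[ℂ] AddMonoidAlgebra ℂ (Fin n → ℤ) →ₗ[ℂ]
      AddMonoidAlgebra ℂ (Fin n → ℤ))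
    (hB : ∀ α β : Fin n → ℤ,
      B (AddMonoidAlgebra.single α 1) (AddMonoidAlgebra.single β 1) =
        ((((2 / ℏ) * Real.sin (ℏ * (bform α β : ℝ) / 2) : ℝ) : ℂ)) •
          AddMonoidAlgebra.single (α + β) (1 : ℂ)) :
    ∀ f g h : AddMonoidAlgebra ℂ (Fin n → ℤ),
      B (B f g) h + B (B g h) f + B (B h f) g = 0 := by
  set φ : ℤ → ℂ := fun t => ((2 / ℏ * Real.sin (ℏ * (t : ℝ) / 2) : ℝ) : ℂ)
  have hφ (p q r : ℤ) : φ p * φ (q - r) + φ q * φ (r - p) + φ r * φ (p - q) = 0 := by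
    have h := Real.sin_mul_sin_sub_add_cyclic (ℏ * p / 2) (ℏ * q / 2) (ℏ * r / 2)
    simp only [φ, Int.cast_sub, mul_sub, sub_div, ← Complex.ofReal_mul, ← Complex.ofReal_add,
      Complex.ofReal_eq_zero]
    linear_combination (2 / ℏ) ^ 2 * h
  intro f g h
  refine jacobiator_eq_zero_of_single B (fun a b c => ?_) f g h
  rw [jacobiator_single_single_single B bform hadd hskew φ hB, hφ, zero_smul]

/-- On `A = AddMonoidAlgebra ℂ (Fin n → ℤ)`, a ℂ-bilinear map `B` satisfying
`B(x_α, x_β) = ((2/ℏ)·sin(ℏ·⟨α,β⟩/2))·x_{α+β}` on the standard basis (for a nonzero real `ℏ`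
and a ℤ-bilinear skew-symmetric form `⟨·,·⟩`) satisfies the Jacobi identity. -/
theorem stmt_16 {n : ℕ}
    (bform : (Fin n → ℤ) → (Fin n → ℤ) → ℤ)
    (hadd : ∀ α β γ : Fin n → ℤ, bform (α + β) γ = bform α γ + bform β γ)
    (hskew : ∀ α β : Fin n → ℤ, bform α β = -bform β α)
    (ℏ : ℝ) (hℏ : ℏ ≠ 0)
    (B : AddMonoidAlgebra ℂ (Fin n → ℤ) →ₗ[ℂ] AddMonoidAlgebra ℂ (Fin n → ℤ) →ₗ[ℂ]
      AddMonoidAlgebra ℂ (Fin n → ℤ))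
    (hB : ∀ α β : Fin n → ℤ,
      B (AddMonoidAlgebra.single α 1) (AddMonoidAlgebra.single β 1) =
        ((((2 / ℏ) * Real.sin (ℏ * (bform α β : ℝ) / 2) : ℝ) : ℂ)) •
          AddMonoidAlgebra.single (α + β) (1 : ℂ)) :
    ∀ f g h : AddMonoidAlgebra ℂ (Fin n → ℤ),
      B (B f g) h + B (B g h) f + B (B h f) g = 0 :=
  stmt_16_general bform hadd hskew ℏ B hB
end
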